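/- Let n ≥ 1 be an integer, M > 0, and let φ : ℝⁿ → ℝ satisfy φ(0) = 0 and |φ(x)−φ(y)| ≤ M|x−y| for all x,y ∈ ℝⁿ. Set C_M = 10(1+M). Let T be a surjective isometry of ℝ^{1+n} ≅ ℝ × ℝⁿ, let r > 0, and let Ω ⊆ ℝ^{1+n} be a set satisfying Ω ∩ T(R(C_M r)) = T(Ω_φ) ∩ T(R(C_M r)) and ∂Ω ∩ T(R(C_M r)) = T(∂Ω_φ) ∩ T(R(C_M r)). Then for every Q₀ ∈ ∂Ω, every β ∈ (0,1] and every c > 0 one has the inclusion T^{-1}( Γ^{β,c}_Ω(Q₀) ∩ T(R(r)) ) ⊆ Γ^{β,c}_{Ω_φ}( T^{-1}(Q₀) ) ∩ R(r). -/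
import Mathlib


open MeasureTheory Metric Set
open scoped ENNReal NNReal

/-- `ℝ^{1+n} = ℝ × ℝⁿ` with the Euclidean (L²) norm. -/
noncomputable abbrev UHS (n : ℕ) := WithLp 2 (ℝ × EuclideanSpace ℝ (Fin n))

noncomputable def fstH {n : ℕ} (X : UHS n) : ℝ :=
  ((WithLp.equiv 2 (ℝ × EuclideanSpace ℝ (Fin n))) X).1

noncomputable def sndH {n : ℕ} (X : UHS n) : EuclideanSpace ℝ (Fin n) :=
  ((WithLp.equiv 2 (ℝ × EuclideanSpace ℝ (Fin n))) X).2

/-- The special Lipschitz domain `Ω_φ = {(t,x) : t > φ(x)}`. -/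
def specialDomain (n : ℕ) (φ : EuclideanSpace ℝ (Fin n) → ℝ) : Set (UHS n) :=
  {X | φ (sndH X) < fstH X}

/-- The open cylinder `R(s) = {(t,x) : |x| < s, |t| < (1+M)s}`. -/
def cylinder (n : ℕ) (M s : ℝ) : Set (UHS n) :=
  {X | ‖sndH X‖ < s ∧ |fstH X| < (1 + M) * s}

/-- The tangential approach region `Γ^{β,c}_Ω(X₀)`. -/
noncomputable def tangRegion {E : Type*} [NormedAddCommGroup E]
    (Ω : Set E) (X₀ : E) (β c : ℝ) : Set E :=
  {X | X ∈ Ω ∧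
    (Metric.infDist X (frontier Ω) ≤ 1 →
      dist X X₀ < (1 + c) * Metric.infDist X (frontier Ω) ^ β) ∧
    (1 ≤ Metric.infDist X (frontier Ω) →
      dist X X₀ < (1 + c) * Metric.infDist X (frontier Ω))}

section Aux

variable {n : ℕ}

lemma fstH_eq (X : UHS n) : fstH X = X.fst := rfl
lemma sndH_eq (X : UHS n) : sndH X = X.snd := rfl

lemma abs_fstH_le (X : UHS n) : |fstH X| ≤ ‖X‖ := by
  have h := WithLp.prod_norm_sq_eq_of_L2 X
  have h1 : ‖X.fst‖ = |fstH X| := by rw [fstH_eq]; exact Real.norm_eq_abs _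
  nlinarith [norm_nonneg X, norm_nonneg X.snd, abs_nonneg (fstH X)]

lemma norm_sndH_le (X : UHS n) : ‖sndH X‖ ≤ ‖X‖ := by
  have h := WithLp.prod_norm_sq_eq_of_L2 X
  have h1 : ‖X.snd‖ = ‖sndH X‖ := rfl
  nlinarith [norm_nonneg X, norm_nonneg X.fst, norm_nonneg (sndH X)]

lemma norm_le_add (X : UHS n) : ‖X‖ ≤ |fstH X| + ‖sndH X‖ := by
  have h := WithLp.prod_norm_sq_eq_of_L2 X
  have h1 : ‖X.fst‖ = |fstH X| := by rw [fstH_eq]; exact Real.norm_eq_abs _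
  have h2 : ‖X.snd‖ = ‖sndH X‖ := rfl
  nlinarith [norm_nonneg X, abs_nonneg (fstH X), norm_nonneg (sndH X)]

lemma fstH_sub (X Y : UHS n) : fstH (X - Y) = fstH X - fstH Y := rfl
lemma sndH_sub (X Y : UHS n) : sndH (X - Y) = sndH X - sndH Y := rfl

lemma fstH_zero : fstH (0 : UHS n) = 0 := rfl
lemma sndH_zero : sndH (0 : UHS n) = 0 := rfl

/-- `0` lies on the boundary of the special Lipschitz domain when `φ 0 = 0`. -/
lemma zero_mem_frontier_specialDomain (φ : EuclideanSpace ℝ (Fin n) → ℝ)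
    (hφ0 : φ 0 = 0) : (0 : UHS n) ∈ frontier (specialDomain n φ) := by
  rw [frontier_eq_closure_inter_closure]
  constructor
  · rw [Metric.mem_closure_iff]
    intro ε hε
    refine ⟨(WithLp.equiv 2 (ℝ × EuclideanSpace ℝ (Fin n))).symm (ε / 2, 0), ?_, ?_⟩
    · show φ (sndH _) < fstH _
      have h1 : sndH ((WithLp.equiv 2 (ℝ × EuclideanSpace ℝ (Fin n))).symm (ε / 2, 0)) = 0 := rfl
      have h2 : fstH ((WithLp.equiv 2 (ℝ × EuclideanSpace ℝ (Fin n))).symm (ε / 2, 0)) = ε / 2 :=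
        rfl
      rw [h1, h2, hφ0]; linarith
    · rw [dist_comm, dist_zero_right]
      have := norm_le_add ((WithLp.equiv 2 (ℝ × EuclideanSpace ℝ (Fin n))).symm (ε / 2, 0))
      have h1 : sndH ((WithLp.equiv 2 (ℝ × EuclideanSpace ℝ (Fin n))).symm (ε / 2, 0)) = 0 := rfl
      have h2 : fstH ((WithLp.equiv 2 (ℝ × EuclideanSpace ℝ (Fin n))).symm (ε / 2, 0)) = ε / 2 :=
        rfl
      rw [h1, h2] at this
      simp only [norm_zero, add_zero] at this
      calc ‖_‖ ≤ |ε / 2| := this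
        _ = ε / 2 := abs_of_pos (by linarith)
        _ < ε := by linarith
  · apply subset_closure
    show ¬ φ (sndH (0 : UHS n)) < fstH (0 : UHS n)
    rw [fstH_zero, sndH_zero, hφ0]
    exact lt_irrefl 0

/-- A point in the small cylinder has norm at most `(2+M)s`. -/
lemma norm_le_of_mem_cylinder {M s : ℝ} {Y : UHS n} (h : Y ∈ cylinder n M s) :
    ‖Y‖ ≤ (2 + M) * s := by
  obtain ⟨h1, h2⟩ := h
  have := norm_le_add Y
  linarith [this, h1, h2]

/-- If `Y` is in the small cylinder and `Z` is within `(3+M)r` of `Y`, then `Z`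
is in the big cylinder. -/
lemma mem_big_cylinder {M r : ℝ} (hM : 0 < M) (hr : 0 < r) {Y Z : UHS n}
    (hY : Y ∈ cylinder n M r) (h : dist Y Z < (3 + M) * r) :
    Z ∈ cylinder n M (10 * (1 + M) * r) := by
  obtain ⟨h1, h2⟩ := hY
  have hd : ‖Z - Y‖ < (3 + M) * r := by rwa [← dist_eq_norm, dist_comm]
  have hf : |fstH (Z - Y)| ≤ ‖Z - Y‖ := abs_fstH_le _
  have hs : ‖sndH (Z - Y)‖ ≤ ‖Z - Y‖ := norm_sndH_le _
  rw [fstH_sub] at hf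
  rw [sndH_sub] at hs
  constructor
  · have : ‖sndH Z‖ ≤ ‖sndH Y‖ + ‖sndH Z - sndH Y‖ := by
      calc ‖sndH Z‖ = ‖sndH Y + (sndH Z - sndH Y)‖ := by rw [add_sub_cancel]
        _ ≤ ‖sndH Y‖ + ‖sndH Z - sndH Y‖ := norm_add_le _ _
    nlinarith
  · have : |fstH Z| ≤ |fstH Y| + |fstH Z - fstH Y| := by
      calc |fstH Z| = |fstH Y + (fstH Z - fstH Y)| := by ring_nf
        _ ≤ |fstH Y| + |fstH Z - fstH Y| := abs_add_le _ _
    nlinarith [mul_pos hM hr, mul_pos (mul_pos hM hM) hr]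

end Aux

theorem statement17 (n : ℕ) (hn : 1 ≤ n) (M : ℝ) (hM : 0 < M)
    (φ : EuclideanSpace ℝ (Fin n) → ℝ) (hφ0 : φ 0 = 0)
    (hφ : ∀ x y : EuclideanSpace ℝ (Fin n), |φ x - φ y| ≤ M * ‖x - y‖)
    (T : UHS n ≃ᵢ UHS n) (r : ℝ) (hr : 0 < r) (Ω : Set (UHS n))
    (hΩ : Ω ∩ T '' cylinder n M (10 * (1 + M) * r) =
      (T '' specialDomain n φ) ∩ T '' cylinder n M (10 * (1 + M) * r))
    (hbd : frontier Ω ∩ T '' cylinder n M (10 * (1 + M) * r) =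
      (T '' frontier (specialDomain n φ)) ∩ T '' cylinder n M (10 * (1 + M) * r))
    (Q₀ : UHS n) (hQ₀ : Q₀ ∈ frontier Ω)
    (β c : ℝ) (hβ : 0 < β) (hβ1 : β ≤ 1) (hc : 0 < c) :
    T.symm '' (tangRegion Ω Q₀ β c ∩ T '' cylinder n M r) ⊆
      tangRegion (specialDomain n φ) (T.symm Q₀) β c ∩ cylinder n M r := by
  rintro _ ⟨X, ⟨⟨hXΩ, hX1, hX2⟩, hXcyl⟩, rfl⟩
  set Y := T.symm X with hYdef
  -- Y is in the small cylinder
  have hYcyl : Y ∈ cylinder n M r := by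
    obtain ⟨Y', hY', hY'X⟩ := hXcyl
    have : Y = Y' := by rw [hYdef, ← hY'X]; simp
    rwa [this]
  -- small cylinder is contained in the big cylinder
  have hsub : cylinder n M r ⊆ cylinder n M (10 * (1 + M) * r) := by
    rintro Z ⟨h1, h2⟩
    constructor
    · nlinarith [norm_nonneg (sndH Z)]
    · nlinarith [abs_nonneg (fstH Z)]
  have hTX : T Y = X := by rw [hYdef]; simp
  have hXbig : X ∈ T '' cylinder n M (10 * (1 + M) * r) :=
    ⟨Y, hsub hYcyl, hTX⟩
  -- Y is in the special domain
  have hYΩ : Y ∈ specialDomain n φ := by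
    have hmem : X ∈ (T '' specialDomain n φ) ∩ T '' cylinder n M (10 * (1 + M) * r) := by
      rw [← hΩ]; exact ⟨hXΩ, hXbig⟩
    obtain ⟨W, hW, hWX⟩ := hmem.1
    have : Y = W := by rw [hYdef, ← hWX]; simp
    rwa [this]
  have h0F : (0 : UHS n) ∈ frontier (specialDomain n φ) :=
    zero_mem_frontier_specialDomain φ hφ0
  -- distance bound for Y
  have hd2le : infDist Y (frontier (specialDomain n φ)) ≤ (2 + M) * r := by
    calc infDist Y (frontier (specialDomain n φ)) ≤ dist Y 0 := infDist_le_dist_of_mem h0F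
      _ = ‖Y‖ := by rw [dist_zero_right]
      _ ≤ (2 + M) * r := norm_le_of_mem_cylinder hYcyl
  -- dist X (T Z) = dist Y Z for all Z
  have hdist : ∀ Z : UHS n, dist X (T Z) = dist Y Z := by
    intro Z
    have := T.symm.dist_eq X (T Z)
    rw [hYdef]
    rw [← this]
    simp
  -- first inequality: infDist X G ≤ infDist Y F
  have hle1 : infDist X (frontier Ω) ≤ infDist Y (frontier (specialDomain n φ)) := by
    apply le_of_forall_pos_le_add
    intro ε hε
    have hε' : 0 < min ε r := lt_min hε hr
    obtain ⟨Z, hZF, hZd⟩ := (infDist_lt_iff ⟨0, h0F⟩).mp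
      (lt_add_of_pos_right (infDist Y (frontier (specialDomain n φ))) hε')
    have hZd3 : dist Y Z < (3 + M) * r := by
      have := min_le_right ε r
      nlinarith
    have hZbig : Z ∈ cylinder n M (10 * (1 + M) * r) := mem_big_cylinder hM hr hYcyl hZd3
    have hTZG : T Z ∈ frontier Ω := by
      have : T Z ∈ (T '' frontier (specialDomain n φ)) ∩
          T '' cylinder n M (10 * (1 + M) * r) := ⟨⟨Z, hZF, rfl⟩, ⟨Z, hZbig, rfl⟩⟩
      rw [← hbd] at this
      exact this.1
    have := min_le_left ε r
    calc infDist X (frontier Ω) ≤ dist X (T Z) := infDist_le_dist_of_mem hTZG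
      _ = dist Y Z := hdist Z
      _ ≤ infDist Y (frontier (specialDomain n φ)) + ε := by linarith
  -- second inequality: infDist Y F ≤ infDist X G
  have hle2 : infDist Y (frontier (specialDomain n φ)) ≤ infDist X (frontier Ω) := by
    apply le_of_forall_pos_le_add
    intro ε hε
    have hε' : 0 < min ε r := lt_min hε hr
    obtain ⟨W, hWG, hWd⟩ := (infDist_lt_iff ⟨Q₀, hQ₀⟩).mp
      (lt_add_of_pos_right (infDist X (frontier Ω)) hε')
    have hWd3 : dist Y (T.symm W) < (3 + M) * r := by
      have h1 : dist Y (T.symm W) = dist X W := by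
        rw [← hdist (T.symm W)]; simp
      have := min_le_right ε r
      rw [h1]
      nlinarith
    have hWbig : T.symm W ∈ cylinder n M (10 * (1 + M) * r) :=
      mem_big_cylinder hM hr hYcyl hWd3
    have hWF : T.symm W ∈ frontier (specialDomain n φ) := by
      have hmem : W ∈ frontier Ω ∩ T '' cylinder n M (10 * (1 + M) * r) :=
        ⟨hWG, ⟨T.symm W, hWbig, by simp⟩⟩
      rw [hbd] at hmem
      obtain ⟨V, hV, hVW⟩ := hmem.1
      have : T.symm W = V := by rw [← hVW]; simp
      rwa [this]
    have := min_le_left ε r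
    calc infDist Y (frontier (specialDomain n φ)) ≤ dist Y (T.symm W) :=
        infDist_le_dist_of_mem hWF
      _ = dist X W := by rw [← hdist (T.symm W)]; simp
      _ ≤ infDist X (frontier Ω) + ε := by linarith
  have key : infDist Y (frontier (specialDomain n φ)) = infDist X (frontier Ω) :=
    le_antisymm hle2 hle1
  have hdQ : dist Y (T.symm Q₀) = dist X Q₀ := T.symm.dist_eq X Q₀
  refine ⟨⟨hYΩ, ?_, ?_⟩, hYcyl⟩
  · intro h1
    rw [hdQ, key]
    exact hX1 (key ▸ h1)
  · intro h1
    rw [hdQ, key]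
    exact hX2 (key ▸ h1)
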